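/- arXiv:math/0404329 — 2 statements merged into one kernel-verified Lean document; each statement's English description precedes it below -/
import Mathlib

section
/- The map s : L^1 → L^1 ⊗ L^1 given on elementary tensors v ⊗ w ↦ (⟨·,u⟩v) ⊗ (⟨·,w⟩u), where u is a fixed unit vector of H and L^1 is identified with H ⊗̂_π H, is a continuous left L^1-linear section of the multiplication map m : L^1 ⊗̂_π L^1 → L^1. -/
open scoped TensorProduct

variable {H : Type} [NormedAddCommGroup H] [InnerProductSpace ℂ H] [CompleteSpace H]

/-- The projective tensor seminorm on `H ⊗ H` (modelling the trace norm on `L¹ = H ⊗̂_π H`). -/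
noncomputable def pnorm1 (x : H ⊗[ℂ] H) : ℝ :=
  sInf {r | ∃ (n : ℕ) (v w : Fin n → H),
    x = ∑ i, v i ⊗ₜ[ℂ] w i ∧ r = ∑ i, ‖v i‖ * ‖w i‖}

/-- The projective tensor seminorm on `L¹ ⊗ L¹` (i.e. on `(H ⊗ H) ⊗ (H ⊗ H)`). -/
noncomputable def pnorm2 (x : (H ⊗[ℂ] H) ⊗[ℂ] (H ⊗[ℂ] H)) : ℝ :=
  sInf {r | ∃ (n : ℕ) (a b : Fin n → H ⊗[ℂ] H),
    x = ∑ i, a i ⊗ₜ[ℂ] b i ∧ r = ∑ i, pnorm1 (a i) * pnorm1 (b i)}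

lemma exists_fin_rep (x : H ⊗[ℂ] H) :
    ∃ (n : ℕ) (v w : Fin n → H), x = ∑ i, v i ⊗ₜ[ℂ] w i := by
  obtain ⟨S, hS⟩ := TensorProduct.exists_finset x
  refine ⟨S.card, fun i => ((S.equivFin).symm i : H × H).1,
    fun i => ((S.equivFin).symm i : H × H).2, ?_⟩
  rw [hS, ← Finset.sum_attach S (fun i => i.1 ⊗ₜ[ℂ] i.2)]
  exact (Equiv.sum_comp S.equivFin.symm fun p => (p : H × H).1 ⊗ₜ[ℂ] (p : H × H).2).symm

lemma pnorm1_nonneg (x : H ⊗[ℂ] H) : 0 ≤ pnorm1 x := by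
  apply Real.sInf_nonneg
  rintro r ⟨n, v, w, -, rfl⟩
  exact Finset.sum_nonneg fun i _ => mul_nonneg (norm_nonneg _) (norm_nonneg _)

lemma pnorm1_bddBelow :
    BddBelow {r | ∃ (n : ℕ) (v w : Fin n → H),
      (x : H ⊗[ℂ] H) = ∑ i, v i ⊗ₜ[ℂ] w i ∧ r = ∑ i, ‖v i‖ * ‖w i‖} := by
  refine ⟨0, ?_⟩
  rintro r ⟨n, v, w, -, rfl⟩
  exact Finset.sum_nonneg fun i _ => mul_nonneg (norm_nonneg _) (norm_nonneg _)

lemma pnorm1_tmul_le (v w : H) : pnorm1 (v ⊗ₜ[ℂ] w) ≤ ‖v‖ * ‖w‖ := by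
  apply csInf_le pnorm1_bddBelow
  exact ⟨1, ![v], ![w], by simp, by simp⟩

/-- Identify `L¹(H)` with `H ⊗̂_π H̄`; `B` is the (bounded, bilinear) pairing on `H`
induced by the inner product after identifying the second factor with the conjugate
Hilbert space, `u` is a fixed unit vector (`B u u = 1`), `mul` is the multiplication
of `L¹` in the tensor picture, `mul (v⊗w) (v'⊗w') = ⟨v',w⟩ (v⊗w')`, `m` the induced
multiplication map `L¹ ⊗̂_π L¹ → L¹`, and `s` the map determined on elementary tensors
by `v ⊗ w ↦ (⟨·,u⟩v) ⊗ (⟨·,w⟩u) = (v⊗u) ⊗ (u⊗w)`.  Then `s` is a continuous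
(projective-seminorm bounded) left `L¹`-linear section of `m`. -/
theorem rank_one_section_of_multiplication
    (u : H) (hu : ‖u‖ = 1)
    (B : H →ₗ[ℂ] H →ₗ[ℂ] ℂ) (hB : ∀ v w, ‖B v w‖ ≤ ‖v‖ * ‖w‖) (hBu : B u u = 1)
    (mul : (H ⊗[ℂ] H) →ₗ[ℂ] (H ⊗[ℂ] H) →ₗ[ℂ] (H ⊗[ℂ] H))
    (hmul : ∀ v w v' w', mul (v ⊗ₜ[ℂ] w) (v' ⊗ₜ[ℂ] w') = B w v' • (v ⊗ₜ[ℂ] w'))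
    (m : (H ⊗[ℂ] H) ⊗[ℂ] (H ⊗[ℂ] H) →ₗ[ℂ] H ⊗[ℂ] H)
    (hm : ∀ x y, m (x ⊗ₜ[ℂ] y) = mul x y)
    (s : (H ⊗[ℂ] H) →ₗ[ℂ] (H ⊗[ℂ] H) ⊗[ℂ] (H ⊗[ℂ] H))
    (hs : ∀ v w, s (v ⊗ₜ[ℂ] w) = (v ⊗ₜ[ℂ] u) ⊗ₜ[ℂ] (u ⊗ₜ[ℂ] w)) :
    (∀ x, m (s x) = x) ∧
    (∀ x y, s (mul x y) = LinearMap.rTensor (H ⊗[ℂ] H) (mul x) (s y)) ∧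
    (∀ x, pnorm2 (s x) ≤ 1 * pnorm1 x) := by
  refine ⟨?_, ?_, ?_⟩
  · intro x
    induction x using TensorProduct.induction_on with
    | zero => simp
    | tmul v w => rw [hs, hm, hmul, hBu, one_smul]
    | add a b ha hb => rw [map_add, map_add, ha, hb]
  · intro x y
    induction x using TensorProduct.induction_on with
    | zero => simp
    | tmul v w =>
      induction y using TensorProduct.induction_on with
      | zero => simp
      | tmul v' w' =>
        rw [hmul, map_smul, hs, hs, LinearMap.rTensor_tmul, hmul,
          TensorProduct.smul_tmul']
      | add a b ha hb => simp only [map_add, ha, hb]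
    | add a b ha hb =>
      simp only [map_add, LinearMap.add_apply, ha, hb, LinearMap.rTensor_add]
  · intro x
    rw [one_mul, pnorm1]
    apply le_csInf
    · obtain ⟨n, v, w, h⟩ := exists_fin_rep x
      exact ⟨∑ i, ‖v i‖ * ‖w i‖, n, v, w, h, rfl⟩
    rintro r ⟨n, v, w, rfl, rfl⟩
    have hsx : s (∑ i, v i ⊗ₜ[ℂ] w i)
        = ∑ i, (v i ⊗ₜ[ℂ] u) ⊗ₜ[ℂ] (u ⊗ₜ[ℂ] w i) := by
      rw [map_sum]; exact Finset.sum_congr rfl fun i _ => hs _ _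
    have h1 : pnorm2 (s (∑ i, v i ⊗ₜ[ℂ] w i))
        ≤ ∑ i, pnorm1 (v i ⊗ₜ[ℂ] u) * pnorm1 (u ⊗ₜ[ℂ] w i) := by
      apply csInf_le
      · refine ⟨0, ?_⟩
        rintro r ⟨n, a, b, -, rfl⟩
        exact Finset.sum_nonneg fun i _ =>
          mul_nonneg (pnorm1_nonneg _) (pnorm1_nonneg _)
      · exact ⟨n, _, _, hsx, rfl⟩
    refine h1.trans (Finset.sum_le_sum fun i _ => ?_)
    have h2 := pnorm1_tmul_le (v i) u
    have h3 := pnorm1_tmul_le u (w i)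
    rw [hu, mul_one] at h2
    rw [hu, one_mul] at h3
    exact mul_le_mul h2 h3 (pnorm1_nonneg _) (norm_nonneg _)
end

section
/- Let ∇ be a connection on an algebra bundle which acts as a derivation on sections (∇(fg) = ∇(f)g + f∇(g)), let Ω be an End-valued 2-form acting as a multiplier with ∇²(a) = [Ω, a] for all sections a, and suppose ∇(Ω) = −c for a scalar 3-form c. Then for the degree-zero Chern-type map Ch_0(a) = tr(a e^{−Ωu}) one has d(Ch_0(a)) = Ch_0'(∇a) + uc·tr-correction, specifically d tr(a e^{−Ωu}) = tr(∇(a) e^{−Ωu}) + uc·tr(a e^{−Ωu}). -/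
/-!
Since `∇(−uΩ) = uc` is a central scalar, `∇` differentiates the truncated exponential
`E = e^{−Ωu}` like an ordinary exponential: `∇E = uc·E`, the top term dropping out because
`Ω` is nilpotent. The Leibniz rule and `tr ∘ ∇ = d ∘ tr` then give
`d tr(aE) = tr(∇a·E) + tr(a·∇E) = tr(∇a·E) + uc·tr(aE)`.
-/

open Finset

section Leibniz

variable {A : Type*} [Ring A] (del : A →+ A)
  (hLeib : ∀ x y : A, del (x * y) = del x * y + x * del y)
include hLeib

theorem map_one_eq_zero_of_leibniz : del 1 = 0 := by
  simpa using hLeib 1 1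

theorem map_pow_succ_of_leibniz {x : A} (hx : Commute (del x) x) (k : ℕ) :
    del (x ^ (k + 1)) = (k + 1) • (del x * x ^ k) := by
  induction k with
  | zero => simp
  | succ k ih =>
    rw [pow_succ' x (k + 1), hLeib, ih, mul_smul_comm, ← mul_assoc, ← hx.eq, mul_assoc,
      ← pow_succ', succ_nsmul _ (k + 1), add_comm]

end Leibniz

def truncExp (𝕜 : Type*) {A : Type*} [Field 𝕜] [Ring A] [Algebra 𝕜 A] (n : ℕ) (x : A) : A :=
  ∑ i ∈ range (n + 1), ((i.factorial : 𝕜))⁻¹ • x ^ i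

theorem inv_factorial_smul_succ_nsmul {𝕜 A : Type*} [Field 𝕜] [CharZero 𝕜] [AddCommGroup A]
    [Module 𝕜 A] (i : ℕ) (y : A) :
    (((i + 1).factorial : 𝕜))⁻¹ • ((i + 1) • y) = ((i.factorial : 𝕜))⁻¹ • y := by
  rw [← Nat.cast_smul_eq_nsmul 𝕜, smul_smul, Nat.factorial_succ, Nat.cast_mul, mul_inv,
    mul_comm, ← mul_assoc, mul_inv_cancel₀ (Nat.cast_ne_zero.mpr i.succ_ne_zero), one_mul]

theorem map_truncExp_of_leibniz {𝕜 A : Type*} [Field 𝕜] [CharZero 𝕜] [Ring A] [Algebra 𝕜 A]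
    (del : A →ₗ[𝕜] A) (hLeib : ∀ x y : A, del (x * y) = del x * y + x * del y)
    {x : A} (hx : Commute (del x) x) {n : ℕ} (hxn : x ^ n = 0) :
    del (truncExp 𝕜 n x) = del x * truncExp 𝕜 n x := by
  have hone : del 1 = 0 := map_one_eq_zero_of_leibniz del.toAddMonoidHom hLeib
  have hpow (k : ℕ) : del (x ^ (k + 1)) = (k + 1) • (del x * x ^ k) :=
    map_pow_succ_of_leibniz del.toAddMonoidHom hLeib hx k
  rw [truncExp, map_sum, sum_range_succ', sum_range_succ, hxn, smul_zero, add_zero, mul_sum]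
  simp only [map_smul, pow_zero, hone, smul_zero, add_zero, hpow, inv_factorial_smul_succ_nsmul,
    mul_smul_comm]

theorem dCh_zero_formula_general
    (R : Type) [CommRing R] [Algebra ℂ R]
    (A : Type) [Ring A] [Algebra ℂ A] [Algebra R A]
    (d : R →ₗ[ℂ] R) (del : A →ₗ[ℂ] A) (tr : A →ₗ[ℂ] R)
    (Ω : A) (u c : R) (n : ℕ)
    -- `∇` is a derivation (on the even elements under consideration):
    (hLeib : ∀ x y : A, del (x * y) = del x * y + x * del y)
    -- `∇` differentiates scalars by `d`:
    (hsmul : ∀ (r : R) (x : A), del (r • x) = d r • x + r • del x)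
    -- `∇(σ(Ω)) = −c`:
    (hΩ : del Ω = -(c • (1 : A)))
    -- the curvature `2`-form is nilpotent (`Ω^n = 0` as `2n > dim X`):
    (hΩn : Ω ^ n = 0)
    -- `u` is a constant:
    (hu : d u = 0)
    -- the trace is closed: `tr(∇ s) = d tr(s)`:
    (htrd : ∀ x : A, tr (del x) = d (tr x))
    -- the trace is `Ω^•(X)((u))`-linear:
    (htrR : ∀ (r : R) (x : A), tr (r • x) = r * tr x) :
    ∀ a : A,
      d (tr (a * ∑ i ∈ Finset.range (n + 1), ((i.factorial : ℂ))⁻¹ • (((-u) • Ω) ^ i))) =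
        tr (del a * ∑ i ∈ Finset.range (n + 1), ((i.factorial : ℂ))⁻¹ • (((-u) • Ω) ^ i))
          + (u * c) *
            tr (a * ∑ i ∈ Finset.range (n + 1), ((i.factorial : ℂ))⁻¹ • (((-u) • Ω) ^ i)) := by
  intro a
  have hdx : del ((-u) • Ω) = (u * c) • (1 : A) := by
    rw [hsmul, map_neg, hu, neg_zero, zero_smul, zero_add, hΩ, smul_neg, neg_smul, neg_neg,
      smul_smul]
  have hcomm : Commute (del ((-u) • Ω)) ((-u) • Ω) := by
    rw [hdx]
    exact (Commute.one_left _).smul_left _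
  have hnil : ((-u) • Ω) ^ n = 0 := by rw [smul_pow, hΩn, smul_zero]
  set E := truncExp ℂ n ((-u) • Ω)
  have hdE : del E = (u * c) • E := by
    rw [map_truncExp_of_leibniz del hLeib hcomm hnil, hdx, smul_one_mul]
  show d (tr (a * E)) = tr (del a * E) + (u * c) * tr (a * E)
  calc d (tr (a * E))
      = tr (del (a * E)) := (htrd _).symm
    _ = tr (del a * E) + tr (a * del E) := by rw [hLeib, map_add]
    _ = tr (del a * E) + (u * c) * tr (a * E) := by rw [hdE, mul_smul_comm, htrR]

/-- Abstract model of the Chern–Weil computation in the paper:  `R` models the graded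
algebra of (even) scalar forms `Ω^•(X)((u))`, `A` models `Ω^•(X, L¹(P))` (with the
multiplier `σ(Ω)` adjoined), `∇` is a connection acting as a derivation, `d` the
de Rham differential on scalars, `tr` the fibrewise trace with `tr ∘ ∇ = d ∘ tr`,
`Ω` the (nilpotent, even) curvature multiplier with `∇(Ω) = −c·1` for a scalar
`3`-form `c`, and `u` a constant scalar.  Then with
`E = e^{−Ωu} = Σ_{i≤n} (−u·Ω)ⁱ/i!` and `Ch₀(a) = tr(a e^{−Ωu})` one has
`d tr(a e^{−Ωu}) = tr(∇(a) e^{−Ωu}) + u c · tr(a e^{−Ωu})`. -/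
theorem dCh_zero_formula
    (R : Type) [CommRing R] [Algebra ℂ R]
    (A : Type) [Ring A] [Algebra ℂ A] [Algebra R A] [IsScalarTower ℂ R A]
    (d : R →ₗ[ℂ] R) (del : A →ₗ[ℂ] A) (tr : A →ₗ[ℂ] R)
    (Ω : A) (u c : R) (n : ℕ)
    -- `∇` is a derivation (on the even elements under consideration):
    (hLeib : ∀ x y : A, del (x * y) = del x * y + x * del y)
    -- `∇` differentiates scalars by `d`:
    (hsmul : ∀ (r : R) (x : A), del (r • x) = d r • x + r • del x)
    -- `∇(σ(Ω)) = −c`: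
    (hΩ : del Ω = -(c • (1 : A)))
    -- the curvature `2`-form is nilpotent (`Ω^n = 0` as `2n > dim X`):
    (hΩn : Ω ^ n = 0)
    -- `u` is a constant:
    (hu : d u = 0)
    -- the trace is closed: `tr(∇ s) = d tr(s)`:
    (htrd : ∀ x : A, tr (del x) = d (tr x))
    -- the trace is `Ω^•(X)((u))`-linear:
    (htrR : ∀ (r : R) (x : A), tr (r • x) = r * tr x) :
    ∀ a : A,
      d (tr (a * ∑ i ∈ Finset.range (n + 1), ((i.factorial : ℂ))⁻¹ • (((-u) • Ω) ^ i))) =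
        tr (del a * ∑ i ∈ Finset.range (n + 1), ((i.factorial : ℂ))⁻¹ • (((-u) • Ω) ^ i))
          + (u * c) *
            tr (a * ∑ i ∈ Finset.range (n + 1), ((i.factorial : ℂ))⁻¹ • (((-u) • Ω) ^ i)) :=
  dCh_zero_formula_general R A d del tr Ω u c n hLeib hsmul hΩ hΩn hu htrd htrR
end
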